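/- arXiv:1607.04709 — 2 statements merged into one kernel-verified Lean document; each statement's English description precedes it below -/
import Mathlib

section
/- Assume (F1), (F2) and (L). Let M > 0, z ∈ Ω̄, λ ∈ [0,∞), and let {λ_j} ⊂ [0,∞) converge to λ. Let (μ₁^j, μ₂^j) ∈ P^D ∩ G^D(M,z,λ_j)' for all j, assume the sequence ⟨μ₁^j, L⟩ converges, and assume (μ₁^j,μ₂^j) converges weakly in the sense of measures to some (μ₁⁰,μ₂⁰) ∈ P^D. Then: (i) setting ρ := lim_j ⟨μ₁^j, L⟩ − ⟨μ₁⁰, L⟩, one has (ρ, μ₁⁰, μ₂⁰) ∈ G^D(M,z,λ)†. (ii) If in addition (ρ, μ₁⁰, μ₂⁰) ∈ G^D(z,λ)† and either A is compact or μ₁⁰ ≠ 0, then there exists (ν₁,ν₂) ∈ P^D ∩ G^D(z,λ)' such that ⟨ν₁, L⟩ = ρ + ⟨μ₁⁰, L⟩ and ⟨μ₁⁰, ψ⟩ + ⟨μ₂⁰, η⟩ = ⟨ν₁, ψ⟩ + ⟨ν₂, η⟩ for all (ψ,η) ∈ C(Ω̄)×C(∂Ω). -/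
open MeasureTheory Filter Topology Set

noncomputable section

/-- Points of `ℝⁿ`. -/
abbrev EucV (n : ℕ) := Fin n → ℝ

/-- Fully nonlinear operators `F = F(x, p, X)` on `ℝⁿ × ℝⁿ × Sⁿ`. -/
abbrev Op (n : ℕ) := EucV n → EucV n → Matrix (Fin n) (Fin n) ℝ → ℝ

/-- The gradient vector `Dϕ(x)` of a test function. -/
def gradV {n : ℕ} (ϕ : EucV n → ℝ) (x : EucV n) : EucV n :=
  fun i => fderiv ℝ ϕ x (Pi.single i 1)

/-- The Hessian matrix `D²ϕ(x)` of a test function. -/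
def hessM {n : ℕ} (ϕ : EucV n → ℝ) (x : EucV n) : Matrix (Fin n) (Fin n) ℝ :=
  Matrix.of fun i j => fderiv ℝ (fun y => fderiv ℝ ϕ y (Pi.single j (1 : ℝ))) x (Pi.single i 1)

/-- `u` is a viscosity subsolution of `lam * u + G[u] = c` at every point of `S`,
with test maxima taken relative to `D`. -/
def SubsolOn {n : ℕ} (D S : Set (EucV n)) (lam : ℝ) (G : Op n) (c : EucV n → ℝ)
    (u : EucV n → ℝ) : Prop :=
  ∀ ϕ : EucV n → ℝ, ContDiff ℝ 2 ϕ → ∀ x ∈ S,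
    IsLocalMaxOn (fun y => u y - ϕ y) D x →
      lam * u x + G x (gradV ϕ x) (hessM ϕ x) ≤ c x

/-- `u` is a viscosity supersolution of `lam * u + G[u] = c` at every point of `S`,
with test minima taken relative to `D`. -/
def SupersolOn {n : ℕ} (D S : Set (EucV n)) (lam : ℝ) (G : Op n) (c : EucV n → ℝ)
    (u : EucV n → ℝ) : Prop :=
  ∀ ϕ : EucV n → ℝ, ContDiff ℝ 2 ϕ → ∀ x ∈ S,
    IsLocalMinOn (fun y => u y - ϕ y) D x →
      c x ≤ lam * u x + G x (gradV ϕ x) (hessM ϕ x)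

/-- The operator `F_φ` for `φ = t·L + χ ∈ Φ⁺`, namely
`F_φ(x,p,X) = t·F(x, t⁻¹p, t⁻¹X) − χ(x)`. -/
def Fphi {n : ℕ} (F : Op n) (t : ℝ) (χ : EucV n → ℝ) : Op n :=
  fun x p X => t * F x (t⁻¹ • p) (t⁻¹ • X) - χ x

/-- `Ω` is a bounded domain: open, connected and bounded. -/
def BoundedDomain {n : ℕ} (Ω : Set (EucV n)) : Prop :=
  IsOpen Ω ∧ IsConnected Ω ∧ Bornology.IsBounded Ω

/-- Solution of the state constraint problem (S_lam):
subsolution of `lam u + F[u] = 0` in `Ω`, supersolution on `Ω̄`. -/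
def SolS {n : ℕ} (Ω : Set (EucV n)) (F : Op n) (lam : ℝ) (v : EucV n → ℝ) : Prop :=
  SubsolOn (closure Ω) Ω lam F (fun _ => 0) v ∧
    SupersolOn (closure Ω) (closure Ω) lam F (fun _ => 0) v

/-- Solution of the state constraint ergodic problem (ES_c). -/
def SolES {n : ℕ} (Ω : Set (EucV n)) (F : Op n) (c : ℝ) (u : EucV n → ℝ) : Prop :=
  SubsolOn (closure Ω) Ω 0 F (fun _ => c) u ∧
    SupersolOn (closure Ω) (closure Ω) 0 F (fun _ => c) u

/-- (CPS): comparison principle for the state constraint problem. -/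
def CondCPS {n : ℕ} (Ω : Set (EucV n)) (F : Op n) : Prop :=
  ∀ lam : ℝ, 0 < lam → ∀ v w : EucV n → ℝ,
    ContinuousOn v (closure Ω) → ContinuousOn w (closure Ω) →
      SubsolOn (closure Ω) Ω lam F (fun _ => 0) v →
        SupersolOn (closure Ω) (closure Ω) lam F (fun _ => 0) w →
          ∀ x ∈ closure Ω, v x ≤ w x

/-- (SLS): `vfam lam` is, for each `lam > 0`, a (continuous) solution of (S_lam). -/
def CondSLS {n : ℕ} (Ω : Set (EucV n)) (F : Op n) (vfam : ℝ → EucV n → ℝ) : Prop :=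
  ∀ lam : ℝ, 0 < lam → ContinuousOn (vfam lam) (closure Ω) ∧ SolS Ω F lam (vfam lam)

/-- (EC): the family `{vfam lam}_{lam>0}` is equicontinuous on `Ω̄`. -/
def CondEC {n : ℕ} (Ω : Set (EucV n)) (vfam : ℝ → EucV n → ℝ) : Prop :=
  ∀ ε : ℝ, 0 < ε → ∃ δ : ℝ, 0 < δ ∧ ∀ lam : ℝ, 0 < lam →
    ∀ x ∈ closure Ω, ∀ y ∈ closure Ω, dist x y < δ → |vfam lam x - vfam lam y| < ε

/-- (CP_loc): local comparison principle for `lam u + F_φ[u] = 0`, `φ ∈ Φ⁺`. -/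
def CondCPloc {n : ℕ} (Ω : Set (EucV n)) (F : Op n) : Prop :=
  ∀ lam : ℝ, 0 < lam → ∀ t : ℝ, 0 < t → ∀ χ : EucV n → ℝ, ContinuousOn χ (closure Ω) →
    ∀ U : Set (EucV n), IsOpen U → U ⊆ Ω →
      ∀ v w : EucV n → ℝ, ContinuousOn v (closure U) → ContinuousOn w (closure U) →
        SubsolOn (closure U) U lam (Fphi F t χ) (fun _ => 0) v →
          SupersolOn (closure U) U lam (Fphi F t χ) (fun _ => 0) w →
            (∀ x ∈ frontier U, v x ≤ w x) → ∀ x ∈ closure U, v x ≤ w x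

/-- Subsolution of the Dirichlet problem `lam u + G[u] = χ` in `Ω`, `u = ψ` on `∂Ω`. -/
def DSubsol {n : ℕ} (Ω : Set (EucV n)) (G : Op n) (lam : ℝ) (χ ψ u : EucV n → ℝ) : Prop :=
  SubsolOn (closure Ω) Ω lam G χ u ∧ ∀ x ∈ frontier Ω, u x ≤ ψ x

/-- Supersolution of the Dirichlet problem `lam u + G[u] = χ` in `Ω`, `u = ψ` on `∂Ω`
(in the generalized viscosity sense at the boundary). -/
def DSupersol {n : ℕ} (Ω : Set (EucV n)) (G : Op n) (lam : ℝ) (χ ψ w : EucV n → ℝ) : Prop :=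
  ∀ ϕ : EucV n → ℝ, ContDiff ℝ 2 ϕ → ∀ x ∈ closure Ω,
    IsLocalMinOn (fun y => w y - ϕ y) (closure Ω) x →
      (x ∈ Ω → χ x ≤ lam * w x + G x (gradV ϕ x) (hessM ϕ x)) ∧
      (x ∈ frontier Ω → χ x ≤ lam * w x + G x (gradV ϕ x) (hessM ϕ x) ∨ ψ x ≤ w x)

/-- Solution of the Dirichlet problem (D_lam). -/
def SolD {n : ℕ} (Ω : Set (EucV n)) (F : Op n) (g : EucV n → ℝ) (lam : ℝ)
    (v : EucV n → ℝ) : Prop :=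
  DSubsol Ω F lam (fun _ => 0) g v ∧ DSupersol Ω F lam (fun _ => 0) g v

/-- Solution of the ergodic Dirichlet problem (ED_c). -/
def SolED {n : ℕ} (Ω : Set (EucV n)) (F : Op n) (g : EucV n → ℝ) (c : ℝ)
    (u : EucV n → ℝ) : Prop :=
  DSubsol Ω F 0 (fun _ => c) g u ∧ DSupersol Ω F 0 (fun _ => c) g u

/-- (CPD): comparison principle for the Dirichlet problem
`lam u + F[u] = χ` in `Ω`, `u = ψ` on `∂Ω`. -/
def CondCPD {n : ℕ} (Ω : Set (EucV n)) (F : Op n) : Prop :=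
  ∀ lam : ℝ, 0 < lam → ∀ χ ψ : EucV n → ℝ, ContinuousOn χ (closure Ω) →
    ContinuousOn ψ (frontier Ω) →
      ∀ u w : EucV n → ℝ, ContinuousOn u (closure Ω) → ContinuousOn w (closure Ω) →
        DSubsol Ω F lam χ ψ u → DSupersol Ω F lam χ ψ w → ∀ x ∈ closure Ω, u x ≤ w x

/-- (SLD): `vfam lam` is, for each `lam > 0`, a (continuous) solution of (D_lam). -/
def CondSLD {n : ℕ} (Ω : Set (EucV n)) (F : Op n) (g : EucV n → ℝ)
    (vfam : ℝ → EucV n → ℝ) : Prop :=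
  ∀ lam : ℝ, 0 < lam → ContinuousOn (vfam lam) (closure Ω) ∧ SolD Ω F g lam (vfam lam)

/-- Member of `F^D(λ)`: a triple `(φ, ψ, u)` with `φ = t·L + χ ∈ Φ⁺`,
`u` a subsolution of `(D_{λ,φ,ψ})`. -/
def memFD {n : ℕ} (Ω : Set (EucV n)) (F : Op n) (lam t : ℝ) (χ ψ u : EucV n → ℝ) : Prop :=
  0 < t ∧ ContinuousOn χ (closure Ω) ∧ ContinuousOn ψ (frontier Ω) ∧
    ContinuousOn u (closure Ω) ∧
    SubsolOn (closure Ω) Ω lam (Fphi F t χ) (fun _ => 0) u ∧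
    ∀ x ∈ frontier Ω, u x ≤ ψ x

/-- Member of `F^D(M,λ)`: additionally `(φ,ψ) ∈ Ψ⁺(M)`. -/
def memFDM {n : ℕ} (Ω : Set (EucV n)) (F : Op n) (M lam t : ℝ) (χ ψ u : EucV n → ℝ) : Prop :=
  memFD Ω F lam t χ ψ u ∧ (∀ x ∈ closure Ω, |χ x| < t * M) ∧
    ∀ x ∈ frontier Ω, |ψ x| < t * M

/-- Member of `F^S(λ)`: a pair `(φ, u)` with `φ = t·L + χ ∈ Φ⁺` and `u` a
subsolution of `λ u + F_φ[u] = 0` in `Ω`. -/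
def memFS {n : ℕ} (Ω : Set (EucV n)) (F : Op n) (lam t : ℝ) (χ u : EucV n → ℝ) : Prop :=
  0 < t ∧ ContinuousOn χ (closure Ω) ∧ ContinuousOn u (closure Ω) ∧
    SubsolOn (closure Ω) Ω lam (Fphi F t χ) (fun _ => 0) u

/-- Viscosity subsolution of the Neumann problem `lam u + G[u] = 0` in `Sint`,
`γ·Du = ψ` on `Sbb`, with test maxima relative to `D`. -/
def NSubsol {n : ℕ} (γ : EucV n → EucV n) (G : Op n) (lam : ℝ) (ψ u : EucV n → ℝ)
    (D Sint Sbb : Set (EucV n)) : Prop :=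
  ∀ ϕ : EucV n → ℝ, ContDiff ℝ 2 ϕ → ∀ x, IsLocalMaxOn (fun y => u y - ϕ y) D x →
    (x ∈ Sint → lam * u x + G x (gradV ϕ x) (hessM ϕ x) ≤ 0) ∧
    (x ∈ Sbb → lam * u x + G x (gradV ϕ x) (hessM ϕ x) ≤ 0 ∨
      dotProduct (γ x) (gradV ϕ x) ≤ ψ x)

/-- Viscosity supersolution of the Neumann problem. -/
def NSupersol {n : ℕ} (γ : EucV n → EucV n) (G : Op n) (lam : ℝ) (ψ w : EucV n → ℝ)
    (D Sint Sbb : Set (EucV n)) : Prop :=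
  ∀ ϕ : EucV n → ℝ, ContDiff ℝ 2 ϕ → ∀ x, IsLocalMinOn (fun y => w y - ϕ y) D x →
    (x ∈ Sint → 0 ≤ lam * w x + G x (gradV ϕ x) (hessM ϕ x)) ∧
    (x ∈ Sbb → 0 ≤ lam * w x + G x (gradV ϕ x) (hessM ϕ x) ∨
      ψ x ≤ dotProduct (γ x) (gradV ϕ x))

/-- Solution of the Neumann problem (N_lam). -/
def SolN {n : ℕ} (Ω : Set (EucV n)) (γ : EucV n → EucV n) (F : Op n) (g : EucV n → ℝ)
    (lam : ℝ) (v : EucV n → ℝ) : Prop :=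
  NSubsol γ F lam g v (closure Ω) Ω (frontier Ω) ∧
    NSupersol γ F lam g v (closure Ω) Ω (frontier Ω)

/-- Solution of the ergodic Neumann problem (EN_c). -/
def SolEN {n : ℕ} (Ω : Set (EucV n)) (γ : EucV n → EucV n) (F : Op n) (g : EucV n → ℝ)
    (c : ℝ) (u : EucV n → ℝ) : Prop :=
  NSubsol γ (fun x p X => F x p X - c) 0 g u (closure Ω) Ω (frontier Ω) ∧
    NSupersol γ (fun x p X => F x p X - c) 0 g u (closure Ω) Ω (frontier Ω)

/-- (OG): `Ω` has `C¹` boundary and `γ` is an oblique (outward) field on `∂Ω`: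
locally `Ω = {h < 0}`, `∂Ω = {h = 0}` for a `C¹` defining function `h` with
nonvanishing gradient (the outward normal direction), and `γ · Dh > 0`. -/
def CondOG {n : ℕ} (Ω : Set (EucV n)) (γ : EucV n → EucV n) : Prop :=
  ContinuousOn γ (frontier Ω) ∧
  ∀ x ∈ frontier Ω, ∃ (U : Set (EucV n)) (h : EucV n → ℝ), IsOpen U ∧ x ∈ U ∧
    ContDiff ℝ 1 h ∧ (∀ y ∈ U, (y ∈ Ω ↔ h y < 0)) ∧
    (∀ y ∈ U, (y ∈ frontier Ω ↔ h y = 0)) ∧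
    ∀ y ∈ U ∩ frontier Ω, gradV h y ≠ 0 ∧ 0 < dotProduct (γ y) (gradV h y)

/-- (CPN_loc): localized comparison principle for the Neumann problem with data in `Ψ⁺`. -/
def CondCPNloc {n : ℕ} (Ω : Set (EucV n)) (γ : EucV n → EucV n) (F : Op n) : Prop :=
  ∀ lam : ℝ, 0 < lam → ∀ t : ℝ, 0 < t → ∀ χ ψ : EucV n → ℝ,
    ContinuousOn χ (closure Ω) → ContinuousOn ψ (frontier Ω) →
      ∀ W : Set (EucV n), IsOpen W →
        ∀ v w : EucV n → ℝ,
          ContinuousOn v (closure (W ∩ closure Ω)) →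
          ContinuousOn w (closure (W ∩ closure Ω)) →
          NSubsol γ (Fphi F t χ) lam ψ v (closure (W ∩ closure Ω)) (W ∩ Ω) (W ∩ frontier Ω) →
          NSupersol γ (Fphi F t χ) lam ψ w (closure (W ∩ closure Ω)) (W ∩ Ω) (W ∩ frontier Ω) →
          (∀ x ∈ Ω ∩ frontier (W ∩ closure Ω), v x ≤ w x) →
          ∀ x ∈ closure (W ∩ closure Ω), v x ≤ w x

/-- Member of `F^N(λ)`: a triple `(φ, ψ, u)` with `φ = t·L + χ ∈ Φ⁺` and `u` a
subsolution of the Neumann problem `(N_{λ,φ,ψ})`. -/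
def memFN {n : ℕ} (Ω : Set (EucV n)) (γ : EucV n → EucV n) (F : Op n) (lam t : ℝ)
    (χ ψ u : EucV n → ℝ) : Prop :=
  0 < t ∧ ContinuousOn χ (closure Ω) ∧ ContinuousOn ψ (frontier Ω) ∧
    ContinuousOn u (closure Ω) ∧
    NSubsol γ (Fphi F t χ) lam ψ u (closure Ω) Ω (frontier Ω)

/-- (SLN): `vfam lam` is, for each `lam > 0`, a (continuous) solution of (N_lam). -/
def CondSLN {n : ℕ} (Ω : Set (EucV n)) (γ : EucV n → EucV n) (F : Op n) (g : EucV n → ℝ)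
    (vfam : ℝ → EucV n → ℝ) : Prop :=
  ∀ lam : ℝ, 0 < lam → ContinuousOn (vfam lam) (closure Ω) ∧ SolN Ω γ F g lam (vfam lam)

section withA

variable {n : ℕ} {A : Type*} [MetricSpace A]

/-- (F1): `F` is the Bellman sup of the linear operators with data `a, b, L`. -/
def CondF1 (Ω : Set (EucV n)) (a : EucV n → A → Matrix (Fin n) (Fin n) ℝ)
    (b : EucV n → A → EucV n) (L : EucV n → A → ℝ) (F : Op n) : Prop :=
  ∀ x ∈ closure Ω, ∀ (p : EucV n) (X : Matrix (Fin n) (Fin n) ℝ),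
    IsLUB (Set.range fun α : A =>
      -Matrix.trace (a x α * X) - dotProduct (b x α) p - L x α) (F x p X)

/-- (F2): `F` is continuous on `Ω̄ × ℝⁿ × Sⁿ`. -/
def CondF2 (Ω : Set (EucV n)) (F : Op n) : Prop :=
  ContinuousOn (fun q : EucV n × EucV n × Matrix (Fin n) (Fin n) ℝ => F q.1 q.2.1 q.2.2)
    ((closure Ω) ×ˢ (Set.univ : Set (EucV n × Matrix (Fin n) (Fin n) ℝ)))

/-- The data `a, b, L` are continuous on `Ω̄ × A` and `a` is nonnegative-definite. -/
def CondData (Ω : Set (EucV n)) (a : EucV n → A → Matrix (Fin n) (Fin n) ℝ)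
    (b : EucV n → A → EucV n) (L : EucV n → A → ℝ) : Prop :=
  ContinuousOn (fun q : EucV n × A => a q.1 q.2) ((closure Ω) ×ˢ (Set.univ : Set A)) ∧
  ContinuousOn (fun q : EucV n × A => b q.1 q.2) ((closure Ω) ×ˢ (Set.univ : Set A)) ∧
  ContinuousOn (fun q : EucV n × A => L q.1 q.2) ((closure Ω) ×ˢ (Set.univ : Set A)) ∧
  ∀ x ∈ closure Ω, ∀ α : A, (a x α).PosSemidef

/-- (L): the running cost `L` is coercive (`L = +∞` at infinity). -/
def CondL (Ω : Set (EucV n)) (L : EucV n → A → ℝ) : Prop :=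
  ∀ M : ℝ, ∃ K : Set A, IsCompact K ∧ ∀ x ∈ closure Ω, ∀ α ∉ K, M ≤ L x α

variable [MeasurableSpace A]

/-- The measure `μ` on `ℝⁿ × A` is carried by `Ω̄ × A`. -/
def SuppInBar (Ω : Set (EucV n)) (μ : Measure (EucV n × A)) : Prop :=
  μ ((closure Ω ×ˢ (Set.univ : Set A))ᶜ) = 0

/-- The pairing `⟨μ, L⟩`. -/
def intL (L : EucV n → A → ℝ) (μ : Measure (EucV n × A)) : ℝ :=
  ∫ q : EucV n × A, L q.1 q.2 ∂μ

/-- `P^S`: Radon probability measures on `Ω̄ × A`. -/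
def PSset (Ω : Set (EucV n)) : Set (Measure (EucV n × A)) :=
  {μ | IsProbabilityMeasure μ ∧ SuppInBar Ω μ}

/-- `G^S(z,λ)'`: the dual cone of `G^S(z,λ)` in `R_L`. -/
def GSdual (Ω : Set (EucV n)) (L : EucV n → A → ℝ) (F : Op n) (z : EucV n) (lam : ℝ) :
    Set (Measure (EucV n × A)) :=
  {μ | Integrable (fun q : EucV n × A => L q.1 q.2) μ ∧
    ∀ (t : ℝ) (χ u : EucV n → ℝ), memFS Ω F lam t χ u →
      0 ≤ ∫ q : EucV n × A, (t * L q.1 q.2 + χ q.1 - lam * u z) ∂μ}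

/-- `P^D`: pairs `(μ₁, μ₂)` of nonnegative Radon measures on `Ω̄ × A` (integrating `L`)
and on `∂Ω`, with total mass one. -/
def PDset (Ω : Set (EucV n)) (L : EucV n → A → ℝ) :
    Set (Measure (EucV n × A) × Measure (EucV n)) :=
  {p | SuppInBar Ω p.1 ∧ Integrable (fun q : EucV n × A => L q.1 q.2) p.1 ∧
    p.2 ((frontier Ω)ᶜ) = 0 ∧ p.1 Set.univ + p.2 Set.univ = 1}

/-- `G^D(z,λ)'`: the dual cone of `G^D(z,λ)`. -/
def GDdual (Ω : Set (EucV n)) (L : EucV n → A → ℝ) (F : Op n) (z : EucV n) (lam : ℝ) :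
    Set (Measure (EucV n × A) × Measure (EucV n)) :=
  {p | Integrable (fun q : EucV n × A => L q.1 q.2) p.1 ∧
    ∀ (t : ℝ) (χ ψ u : EucV n → ℝ), memFD Ω F lam t χ ψ u →
      0 ≤ (∫ w : EucV n × A, (t * L w.1 w.2 + χ w.1 - lam * u z) ∂p.1) +
        ∫ x, lam * (ψ x - u z) ∂p.2}

/-- `G^D(M,z,λ)'`: the dual cone of `G^D(M,z,λ)`. -/
def GDdualM (Ω : Set (EucV n)) (L : EucV n → A → ℝ) (F : Op n) (M : ℝ) (z : EucV n)
    (lam : ℝ) : Set (Measure (EucV n × A) × Measure (EucV n)) :=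
  {p | Integrable (fun q : EucV n × A => L q.1 q.2) p.1 ∧
    ∀ (t : ℝ) (χ ψ u : EucV n → ℝ), memFDM Ω F M lam t χ ψ u →
      0 ≤ (∫ w : EucV n × A, (t * L w.1 w.2 + χ w.1 - lam * u z) ∂p.1) +
        ∫ x, lam * (ψ x - u z) ∂p.2}

/-- `G^D(z,λ)†`: triples `(ρ, μ₁, μ₂)` with `(μ₁,μ₂) ∈ P^D` and
`0 ≤ tρ + ⟨μ₁, tL+χ−λu(z)⟩ + λ⟨μ₂, ψ−u(z)⟩` for all `(tL+χ, ψ, u) ∈ F^D(λ)`. -/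
def GDdag (Ω : Set (EucV n)) (L : EucV n → A → ℝ) (F : Op n) (z : EucV n) (lam : ℝ) :
    Set (ℝ × Measure (EucV n × A) × Measure (EucV n)) :=
  {q | 0 ≤ q.1 ∧ (q.2.1, q.2.2) ∈ PDset Ω L ∧
    ∀ (t : ℝ) (χ ψ u : EucV n → ℝ), memFD Ω F lam t χ ψ u →
      0 ≤ t * q.1 + (∫ w : EucV n × A, (t * L w.1 w.2 + χ w.1 - lam * u z) ∂q.2.1) +
        lam * ∫ x, (ψ x - u z) ∂q.2.2}

/-- `G^D(M,z,λ)†`. -/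
def GDdagM (Ω : Set (EucV n)) (L : EucV n → A → ℝ) (F : Op n) (M : ℝ) (z : EucV n)
    (lam : ℝ) : Set (ℝ × Measure (EucV n × A) × Measure (EucV n)) :=
  {q | 0 ≤ q.1 ∧ (q.2.1, q.2.2) ∈ PDset Ω L ∧
    ∀ (t : ℝ) (χ ψ u : EucV n → ℝ), memFDM Ω F M lam t χ ψ u →
      0 ≤ t * q.1 + (∫ w : EucV n × A, (t * L w.1 w.2 + χ w.1 - lam * u z) ∂q.2.1) +
        lam * ∫ x, (ψ x - u z) ∂q.2.2}

/-- `P₁^D`: first marginals of elements of `P^D ∩ G^D(0)'`. -/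
def P1Dset (Ω : Set (EucV n)) (L : EucV n → A → ℝ) (F : Op n) :
    Set (Measure (EucV n × A)) :=
  {μ₁ | ∃ μ₂ : Measure (EucV n), (μ₁, μ₂) ∈ PDset Ω L ∧ (μ₁, μ₂) ∈ GDdual Ω L F 0 0}

/-- Weak convergence of pairs of measures, tested against `C_c(Ω̄ × A) × C(∂Ω)`. -/
def WeakConvD (Ω : Set (EucV n)) (ps : ℕ → Measure (EucV n × A) × Measure (EucV n))
    (p : Measure (EucV n × A) × Measure (EucV n)) : Prop :=
  ∀ φ : EucV n × A → ℝ, Continuous φ → HasCompactSupport φ →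
    ∀ ψ : EucV n → ℝ, ContinuousOn ψ (frontier Ω) →
      Tendsto (fun k => (∫ q, φ q ∂(ps k).1) + ∫ x, ψ x ∂(ps k).2) atTop
        (𝓝 ((∫ q, φ q ∂p.1) + ∫ x, ψ x ∂p.2))

/-- `P^N`: pairs of a Radon probability measure on `Ω̄ × A` integrating `L` and a
nonnegative Radon measure on `∂Ω`. -/
def PNset (Ω : Set (EucV n)) (L : EucV n → A → ℝ) :
    Set (Measure (EucV n × A) × Measure (EucV n)) :=
  {p | IsProbabilityMeasure p.1 ∧ SuppInBar Ω p.1 ∧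
    Integrable (fun q : EucV n × A => L q.1 q.2) p.1 ∧
    IsFiniteMeasure p.2 ∧ p.2 ((frontier Ω)ᶜ) = 0}

/-- `G^N(z,λ)'`: the dual cone of `G^N(z,λ)`. -/
def GNdual (Ω : Set (EucV n)) (γ : EucV n → EucV n) (L : EucV n → A → ℝ) (F : Op n)
    (z : EucV n) (lam : ℝ) : Set (Measure (EucV n × A) × Measure (EucV n)) :=
  {p | Integrable (fun q : EucV n × A => L q.1 q.2) p.1 ∧
    ∀ (t : ℝ) (χ ψ u : EucV n → ℝ), memFN Ω γ F lam t χ ψ u →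
      0 ≤ (∫ w : EucV n × A, (t * L w.1 w.2 + χ w.1 - lam * u z) ∂p.1) + ∫ x, ψ x ∂p.2}

end withA

end


lemma aux_tietze {X : Type*} [MetricSpace X] {s : Set X} (hs : IsClosed s) {f : X → ℝ}
    (hf : ContinuousOn f s) : ∃ g : X → ℝ, Continuous g ∧ ∀ x ∈ s, g x = f x := by
  obtain ⟨g, hg⟩ := ContinuousMap.exists_restrict_eq (Y := ℝ) hs
    ⟨s.restrict f, continuousOn_iff_continuous_restrict.mp hf⟩
  exact ⟨g, g.continuous, fun x hx => congrFun (congrArg ContinuousMap.toFun hg) ⟨x, hx⟩⟩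

lemma aux_urysohn {X : Type*} [MetricSpace X] [LocallyCompactSpace X] {K : Set X}
    (hK : IsCompact K) :
    ∃ φ : X → ℝ, Continuous φ ∧ HasCompactSupport φ ∧ Set.EqOn φ 1 K ∧
      ∀ x, φ x ∈ Set.Icc (0:ℝ) 1 := by
  obtain ⟨f, h1, _, hcs, hicc⟩ :=
    exists_continuous_one_zero_of_isCompact hK isClosed_empty (disjoint_empty _)
  exact ⟨f, f.continuous, hcs, h1, hicc⟩

lemma aux_bound_on_compact {X : Type*} [MetricSpace X] {s : Set X} (hs : IsCompact s)
    {f : X → ℝ} (hf : Continuous f) : ∃ C : ℝ, 0 ≤ C ∧ ∀ x ∈ s, |f x| ≤ C := by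
  rcases s.eq_empty_or_nonempty with h | h
  · exact ⟨0, le_rfl, by simp [h]⟩
  · obtain ⟨x₀, hx₀, hmax⟩ := hs.exists_isMaxOn h (continuous_abs.comp hf).continuousOn
    exact ⟨|f x₀|, abs_nonneg _, fun x hx => hmax hx⟩

lemma aux_integrable_bdd {X : Type*} [MeasurableSpace X] {μ : Measure X} [IsFiniteMeasure μ]
    {f : X → ℝ} (hm : AEStronglyMeasurable f μ) {C : ℝ} (h : ∀ᵐ x ∂μ, ‖f x‖ ≤ C) :
    Integrable f μ := (integrable_const C).mono' hm h

set_option maxHeartbeats 2000000 in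
/-- Lemma 4.7 ("d-cpt"): limits of dual-cone measures for the Dirichlet problem.
(i) The limit triple `(ρ, μ₁⁰, μ₂⁰)` belongs to `G^D(M,z,λ)†`;
(ii) if moreover it belongs to `G^D(z,λ)†` and either `A` is compact or `μ₁⁰ ≠ 0`,
then there is `(ν₁,ν₂) ∈ P^D ∩ G^D(z,λ)'` with `⟨ν₁,L⟩ = ρ + ⟨μ₁⁰,L⟩` and the same
pairings against `C(Ω̄) × C(∂Ω)`. -/
theorem stmt14 {n : ℕ} {A : Type*} [MetricSpace A] [Nonempty A]
    [SigmaCompactSpace A] [LocallyCompactSpace A] [MeasurableSpace A] [BorelSpace A]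
    (Ω : Set (EucV n)) (hΩ : BoundedDomain Ω)
    (a : EucV n → A → Matrix (Fin n) (Fin n) ℝ) (b : EucV n → A → EucV n)
    (L : EucV n → A → ℝ) (F : Op n)
    (hdata : CondData Ω a b L) (hF1 : CondF1 Ω a b L F) (hF2 : CondF2 Ω F)
    (hL : CondL Ω L)
    (g : EucV n → ℝ) (hg : ContinuousOn g (frontier Ω))
    (M : ℝ) (hM : 0 < M) (z : EucV n) (hz : z ∈ closure Ω)
    (lam : ℝ) (hlam : 0 ≤ lam)
    (lams : ℕ → ℝ) (hlams : ∀ j, 0 ≤ lams j) (hconv : Tendsto lams atTop (𝓝 lam))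
    (ps : ℕ → Measure (EucV n × A) × Measure (EucV n))
    (hps : ∀ j, ps j ∈ PDset Ω L ∧ ps j ∈ GDdualM Ω L F M z (lams j))
    (l : ℝ) (hl : Tendsto (fun j => intL L (ps j).1) atTop (𝓝 l))
    (p0 : Measure (EucV n × A) × Measure (EucV n)) (hp0 : p0 ∈ PDset Ω L)
    (hw : WeakConvD Ω ps p0) :
    ((l - intL L p0.1, p0.1, p0.2) ∈ GDdagM Ω L F M z lam) ∧
    (((l - intL L p0.1, p0.1, p0.2) ∈ GDdag Ω L F z lam ∧ (CompactSpace A ∨ p0.1 ≠ 0)) →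
      ∃ ν : Measure (EucV n × A) × Measure (EucV n),
        ν ∈ PDset Ω L ∧ ν ∈ GDdual Ω L F z lam ∧
        intL L ν.1 = (l - intL L p0.1) + intL L p0.1 ∧
        ∀ ψ η : EucV n → ℝ, ContinuousOn ψ (closure Ω) → ContinuousOn η (frontier Ω) →
          (∫ q : EucV n × A, ψ q.1 ∂p0.1) + (∫ x, η x ∂p0.2) =
            (∫ q : EucV n × A, ψ q.1 ∂ν.1) + ∫ x, η x ∂ν.2) := by
  classical
  obtain ⟨hΩo, hΩconn, hΩb⟩ := hΩ
  have hΩcpt : IsCompact (closure Ω) :=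
    Metric.isCompact_of_isClosed_isBounded isClosed_closure hΩb.closure
  have hΩne : (closure Ω).Nonempty := hΩconn.nonempty.closure
  set S : Set (EucV n × A) := (closure Ω) ×ˢ (univ : Set A) with hSdef
  have hSclosed : IsClosed S := isClosed_closure.prod isClosed_univ
  have hSmeas : MeasurableSet S := hSclosed.measurableSet
  -- a.e. membership in S
  have hae : ∀ (μ : Measure (EucV n × A)), SuppInBar Ω μ → ∀ᵐ q ∂μ, q ∈ S := by
    intro μ h
    rw [Filter.eventually_iff, mem_ae_iff]
    exact h
  have haeb : ∀ (σ : Measure (EucV n)), σ ((frontier Ω)ᶜ) = 0 → ∀ᵐ x ∂σ, x ∈ frontier Ω := by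
    intro σ h
    rw [Filter.eventually_iff, mem_ae_iff]
    simpa using h
  -- finiteness of the measures
  have hfin : ∀ (μ : Measure (EucV n × A)) (σ : Measure (EucV n)), (μ, σ) ∈ PDset Ω L →
      IsFiniteMeasure μ ∧ IsFiniteMeasure σ := by
    intro μ σ hp
    obtain ⟨-, -, -, hsum⟩ := hp
    constructor
    · exact ⟨lt_of_le_of_lt (le_trans le_self_add hsum.le) ENNReal.one_lt_top⟩
    · exact ⟨lt_of_le_of_lt (le_trans le_add_self hsum.le) ENNReal.one_lt_top⟩
  have hfin1 : ∀ j, IsFiniteMeasure (ps j).1 := fun j => (hfin _ _ (hps j).1).1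
  have hfin2 : ∀ j, IsFiniteMeasure (ps j).2 := fun j => (hfin _ _ (hps j).1).2
  haveI hfin01 : IsFiniteMeasure p0.1 := (hfin _ _ hp0).1
  haveI hfin02 : IsFiniteMeasure p0.2 := (hfin _ _ hp0).2
  -- real masses
  have hm2le : ∀ (μ : Measure (EucV n × A)) (σ : Measure (EucV n)), (μ, σ) ∈ PDset Ω L →
      (μ univ).toReal = 1 - (σ univ).toReal ∧ (μ univ).toReal ≤ 1 ∧ (σ univ).toReal ≤ 1 := by
    intro μ σ hp
    obtain ⟨-, -, -, hsum⟩ := hp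
    have h1 : μ univ ≠ ⊤ := ne_top_of_le_ne_top ENNReal.one_ne_top (le_trans le_self_add hsum.le)
    have h2 : σ univ ≠ ⊤ := ne_top_of_le_ne_top ENNReal.one_ne_top (le_trans le_add_self hsum.le)
    have := congrArg ENNReal.toReal hsum
    rw [ENNReal.toReal_add h1 h2, ENNReal.toReal_one] at this
    have n1 : (0:ℝ) ≤ (μ univ).toReal := ENNReal.toReal_nonneg
    have n2 : (0:ℝ) ≤ (σ univ).toReal := ENNReal.toReal_nonneg
    exact ⟨by linarith, by linarith, by linarith⟩
  -- lower bound for L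
  obtain ⟨c, hc0, hcL⟩ : ∃ c : ℝ, c ≤ 0 ∧ ∀ x ∈ closure Ω, ∀ α : A, c ≤ L x α := by
    obtain ⟨K, hKc, hKL⟩ := hL 0
    rcases (closure Ω ×ˢ K).eq_empty_or_nonempty with hempty | hne
    · refine ⟨0, le_rfl, fun x hx α => ?_⟩
      rcases em (α ∈ K) with hα | hα
      · exact absurd (Set.mk_mem_prod hx hα) (by simp [hempty])
      · exact hKL x hx α hα
    · obtain ⟨q₀, hq₀, hmin⟩ := (hΩcpt.prod hKc).exists_isMinOn hne
        ((hdata.2.2.1).mono (fun q hq => ⟨hq.1, trivial⟩))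
      refine ⟨min (L q₀.1 q₀.2) 0, min_le_right _ _, fun x hx α => ?_⟩
      rcases em (α ∈ K) with hα | hα
      · exact le_trans (min_le_left _ _) (hmin (Set.mk_mem_prod hx hα))
      · exact le_trans (min_le_right _ _) (hKL x hx α hα)
  -- integrability of functions of x
  have hint1 : ∀ (μ : Measure (EucV n × A)), IsFiniteMeasure μ → SuppInBar Ω μ →
      ∀ (h : EucV n → ℝ), Continuous h → Integrable (fun q : EucV n × A => h q.1) μ := by
    intro μ hfinμ hsupp h hc
    haveI := hfinμ
    obtain ⟨C, -, hC⟩ := aux_bound_on_compact hΩcpt hc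
    refine aux_integrable_bdd (C := C) ((hc.comp continuous_fst).aestronglyMeasurable) ?_
    filter_upwards [hae μ hsupp] with q hq
    simpa using hC _ hq.1
  have hint2 : ∀ (σ : Measure (EucV n)), IsFiniteMeasure σ → σ ((frontier Ω)ᶜ) = 0 →
      ∀ (h : EucV n → ℝ), Continuous h → Integrable h σ := by
    intro σ hfinσ hsupp h hc
    haveI := hfinσ
    obtain ⟨C, -, hC⟩ := aux_bound_on_compact hΩcpt hc
    refine aux_integrable_bdd (C := C) hc.aestronglyMeasurable ?_
    filter_upwards [haeb σ hsupp] with x hx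
    simpa using hC _ (frontier_subset_closure hx)
  -- convergence of boundary masses
  have hmass2 : Tendsto (fun j => (((ps j).2) univ).toReal) atTop (𝓝 ((p0.2 univ).toReal)) := by
    have h := hw (fun _ => 0) continuous_const (by simp [HasCompactSupport, tsupport])
      (fun _ => 1) continuousOn_const
    simpa [integral_const, smul_eq_mul, measureReal_def] using h
  have hmass1 : Tendsto (fun j => (((ps j).1) univ).toReal) atTop (𝓝 ((p0.1 univ).toReal)) := by
    have heq : ∀ j, (((ps j).1) univ).toReal = 1 - (((ps j).2) univ).toReal :=
      fun j => (hm2le _ _ (hps j).1).1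
    rw [show ((p0.1 univ).toReal) = 1 - ((p0.2 univ).toReal) from (hm2le _ _ hp0).1]
    exact Tendsto.congr (fun j => (heq j).symm) ((tendsto_const_nhds).sub hmass2)
  -- tightness
  have htight : ∀ δ : ℝ, 0 < δ → ∃ K : Set A, IsCompact K ∧
      (∀ j, (((ps j).1) ((closure Ω ×ˢ K)ᶜ)).toReal ≤ δ) ∧
      ((p0.1 ((closure Ω ×ˢ K)ᶜ)).toReal ≤ δ) := by
    intro δ hδ
    obtain ⟨B₀, hB₀⟩ := hl.bddAbove_range
    set B : ℝ := max B₀ (intL L p0.1) with hBdef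
    have hB : ∀ j, intL L (ps j).1 ≤ B :=
      fun j => le_trans (hB₀ (Set.mem_range_self j)) (le_max_left _ _)
    have hB0 : intL L p0.1 ≤ B := le_max_right _ _
    set R : ℝ := max 0 (B - c) with hRdef
    have hR0 : 0 ≤ R := le_max_left _ _
    set M' : ℝ := (R + 1) / δ with hM'def
    have hM'pos : 0 < M' := div_pos (by linarith) hδ
    obtain ⟨K, hKc, hKL⟩ := hL (M' + c)
    have hkey : ∀ (μ : Measure (EucV n × A)), IsFiniteMeasure μ → SuppInBar Ω μ →
        Integrable (fun q : EucV n × A => L q.1 q.2) μ → intL L μ ≤ B →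
        (μ univ).toReal ≤ 1 → (μ ((closure Ω ×ˢ K)ᶜ)).toReal ≤ δ := by
      intro μ hμfin hsupp hintL hintLB hmle
      haveI := hμfin
      have hmnn : (0:ℝ) ≤ (μ univ).toReal := ENNReal.toReal_nonneg
      have hnn : 0 ≤ᵐ[μ] fun q : EucV n × A => L q.1 q.2 - c := by
        filter_upwards [hae μ hsupp] with q hq
        have := hcL q.1 hq.1 q.2
        simp only [Pi.zero_apply]
        linarith
      have hintf : Integrable (fun q : EucV n × A => L q.1 q.2 - c) μ :=
        hintL.sub (integrable_const c)
      have cheb := mul_meas_ge_le_integral_of_nonneg hnn hintf M'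
      have hintval : ∫ q : EucV n × A, (L q.1 q.2 - c) ∂μ = intL L μ - c * (μ univ).toReal := by
        rw [integral_sub hintL (integrable_const c), integral_const, smul_eq_mul, measureReal_def]
        unfold intL
        ring
      have hintle : ∫ q : EucV n × A, (L q.1 q.2 - c) ∂μ ≤ R := by
        rw [hintval]
        have h1 : c * (μ univ).toReal ≥ c := by nlinarith
        have h2 : intL L μ - c * (μ univ).toReal ≤ B - c := by nlinarith
        exact le_trans h2 (le_max_right _ _)
      have hmono : μ ((closure Ω ×ˢ K)ᶜ) ≤ μ {q : EucV n × A | M' ≤ L q.1 q.2 - c} := by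
        apply measure_mono_ae
        filter_upwards [hae μ hsupp] with q hq hqc
        have hq2 : q.2 ∉ K := fun hk => hqc (Set.mk_mem_prod hq.1 hk)
        have := hKL q.1 hq.1 q.2 hq2
        show M' ≤ L q.1 q.2 - c
        linarith
      have hmono' : (μ ((closure Ω ×ˢ K)ᶜ)).toReal ≤
          (μ {q : EucV n × A | M' ≤ L q.1 q.2 - c}).toReal :=
        ENNReal.toReal_mono (measure_ne_top _ _) hmono
      have hμnn : (0:ℝ) ≤ (μ ((closure Ω ×ˢ K)ᶜ)).toReal := ENNReal.toReal_nonneg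
      have hfinal : M' * (μ ((closure Ω ×ˢ K)ᶜ)).toReal ≤ R :=
        le_trans (by rw [measureReal_def]; nlinarith) (le_trans cheb hintle)
      have hlast : (μ ((closure Ω ×ˢ K)ᶜ)).toReal ≤ R / M' := by
        rw [le_div_iff₀ hM'pos]; linarith
      refine le_trans hlast ?_
      rw [hM'def, div_div_eq_mul_div, div_le_iff₀ (by positivity)]
      nlinarith
    exact ⟨K, hKc, fun j => hkey _ (hfin1 j) (hps j).1.1 (hps j).1.2.1 (hB j)
      (hm2le _ _ (hps j).1).2.1, hkey _ hfin01 hp0.1 hp0.2.1 hB0 (hm2le _ _ hp0).2.1⟩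
  -- weak convergence against bounded continuous functions of x
  have hconvh : ∀ h : EucV n → ℝ, Continuous h →
      Tendsto (fun j => ∫ q : EucV n × A, h q.1 ∂(ps j).1) atTop
        (𝓝 (∫ q : EucV n × A, h q.1 ∂p0.1)) := by
    intro h hc
    obtain ⟨C, hC0, hC⟩ := aux_bound_on_compact hΩcpt hc
    rw [Metric.tendsto_atTop]
    intro ε hε
    set δ : ℝ := ε / (4 * (C + 1)) with hδdef
    have hδ : 0 < δ := by positivity
    obtain ⟨K, hKc, hKj, hK0⟩ := htight δ hδ
    obtain ⟨φ, hφc, hφcs, hφ1, hφicc⟩ := aux_urysohn (hΩcpt.prod hKc)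
    set f : EucV n × A → ℝ := fun q => h q.1 * φ q with hfdef
    have hfc : Continuous f := (hc.comp continuous_fst).mul hφc
    have hfcs : HasCompactSupport f := by
      apply HasCompactSupport.intro hφcs
      intro q hq
      simp [hfdef, image_eq_zero_of_notMem_tsupport hq]
    have hwf := hw f hfc hfcs (fun _ => 0) continuousOn_const
    simp only [integral_zero, add_zero] at hwf
    rw [Metric.tendsto_atTop] at hwf
    obtain ⟨N, hN⟩ := hwf (ε / 2) (by positivity)
    -- error estimate
    have herr : ∀ (μ : Measure (EucV n × A)), IsFiniteMeasure μ → SuppInBar Ω μ →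
        (μ ((closure Ω ×ˢ K)ᶜ)).toReal ≤ δ →
        |(∫ q : EucV n × A, h q.1 ∂μ) - ∫ q, f q ∂μ| ≤ C * δ := by
      intro μ hμfin hsupp hμδ
      haveI := hμfin
      have hint_h : Integrable (fun q : EucV n × A => h q.1) μ := hint1 μ hμfin hsupp h hc
      have hint_f : Integrable f μ := by
        refine aux_integrable_bdd (C := C) hfc.aestronglyMeasurable ?_
        filter_upwards [hae μ hsupp] with q hq
        have h1 := hC q.1 hq.1
        have h2 := hφicc q
        rw [Real.norm_eq_abs, hfdef, abs_mul]
        have : |φ q| ≤ 1 := abs_le.mpr ⟨by linarith [h2.1], h2.2⟩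
        nlinarith [abs_nonneg (h q.1), abs_nonneg (φ q)]
      rw [← integral_sub hint_h hint_f, ← Real.norm_eq_abs]
      have hbound : ∀ᵐ q ∂μ, ‖h q.1 - f q‖ ≤
          Set.indicator ((closure Ω ×ˢ K)ᶜ) (fun _ => C) q := by
        filter_upwards [hae μ hsupp] with q hq
        rcases em (q ∈ closure Ω ×ˢ K) with hqK | hqK
        · rw [Set.indicator_of_notMem (Set.notMem_compl_iff.mpr hqK)]
          have heq1 : φ q = 1 := hφ1 hqK
          simp [hfdef, heq1]
        · rw [Set.indicator_of_mem (Set.mem_compl hqK)]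
          have h1 := hC q.1 hq.1
          have h2 := hφicc q
          rw [Real.norm_eq_abs, hfdef]
          have heq : h q.1 - h q.1 * φ q = h q.1 * (1 - φ q) := by ring
          rw [heq, abs_mul]
          have h3 : |1 - φ q| ≤ 1 := abs_le.mpr ⟨by linarith [h2.2], by linarith [h2.1]⟩
          nlinarith [abs_nonneg (h q.1)]
      have hind : Integrable (Set.indicator ((closure Ω ×ˢ K)ᶜ) (fun _ => C)) μ :=
        (integrable_const C).indicator (hΩcpt.prod hKc).isClosed.measurableSet.compl
      calc ‖∫ q : EucV n × A, (h q.1 - f q) ∂μ‖ ≤ ∫ q : EucV n × A, ‖h q.1 - f q‖ ∂μ :=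
            norm_integral_le_integral_norm _
        _ ≤ ∫ q, Set.indicator ((closure Ω ×ˢ K)ᶜ) (fun _ => C) q ∂μ :=
            integral_mono_ae (hint_h.sub hint_f).norm hind hbound
        _ = (μ ((closure Ω ×ˢ K)ᶜ)).toReal * C := by
            rw [integral_indicator_const _ (hΩcpt.prod hKc).isClosed.measurableSet.compl]
            simp [smul_eq_mul, measureReal_def]
        _ ≤ C * δ := by nlinarith [ENNReal.toReal_nonneg (a := μ ((closure Ω ×ˢ K)ᶜ))]
    refine ⟨N, fun j hj => ?_⟩
    have h1 := herr _ (hfin1 j) (hps j).1.1 (hKj j)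
    have h2 := herr _ hfin01 hp0.1 hK0
    have h3 := hN j hj
    rw [Real.dist_eq] at h3 ⊢
    have hCδ : C * δ ≤ ε / 4 := by
      have hδeq : δ * (4 * (C + 1)) = ε := by
        rw [hδdef]; field_simp
      nlinarith
    have t1 := abs_sub_le (∫ q : EucV n × A, h q.1 ∂(ps j).1) (∫ q, f q ∂(ps j).1)
      (∫ q : EucV n × A, h q.1 ∂p0.1)
    have t2 := abs_sub_le (∫ q, f q ∂(ps j).1) (∫ q, f q ∂p0.1)
      (∫ q : EucV n × A, h q.1 ∂p0.1)
    have t3 : |(∫ q, f q ∂p0.1) - ∫ q : EucV n × A, h q.1 ∂p0.1| =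
        |(∫ q : EucV n × A, h q.1 ∂p0.1) - ∫ q, f q ∂p0.1| := abs_sub_comm _ _
    linarith
  -- lower semicontinuity: ⟨μ₁⁰, L⟩ ≤ l
  have hLle : intL L p0.1 ≤ l := by
    obtain ⟨Lt, hLtc, hLt⟩ := aux_tietze hSclosed (f := fun q : EucV n × A => L q.1 q.2)
      hdata.2.2.1
    set E : CompactExhaustion A := CompactExhaustion.choice A with hEdef
    have hury : ∀ m : ℕ, ∃ φ : EucV n × A → ℝ, Continuous φ ∧ HasCompactSupport φ ∧
        Set.EqOn φ 1 (closure Ω ×ˢ E m) ∧ ∀ q, φ q ∈ Set.Icc (0:ℝ) 1 :=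
      fun m => aux_urysohn (hΩcpt.prod (E.isCompact m))
    choose φ hφc hφcs hφ1 hφicc using hury
    set gm : ℕ → EucV n × A → ℝ := fun m q => max 0 (min (Lt q - c) m) * φ m q with hgm
    have hgmc : ∀ m, Continuous (gm m) :=
      fun m => (continuous_const.max ((hLtc.sub continuous_const).min continuous_const)).mul
        (hφc m)
    have hgm_nonneg : ∀ m q, 0 ≤ gm m q :=
      fun m q => mul_nonneg (le_max_left _ _) (hφicc m q).1
    have hgm_le : ∀ m q, gm m q ≤ (m : ℝ) := by
      intro m q
      have h1 : max 0 (min (Lt q - c) (m:ℝ)) ≤ (m:ℝ) :=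
        max_le (Nat.cast_nonneg m) (min_le_right _ _)
      have h2 := hφicc m q
      simp only [hgm]
      exact le_trans (mul_le_of_le_one_right (le_max_left _ _) h2.2) h1
    have hgm_leL : ∀ m, ∀ q ∈ S, gm m q ≤ L q.1 q.2 - c := by
      intro m q hq
      have hLq : Lt q = L q.1 q.2 := hLt q hq
      have h0 : 0 ≤ L q.1 q.2 - c := by have := hcL q.1 hq.1 q.2; linarith
      have h1 : max 0 (min (Lt q - c) (m:ℝ)) ≤ L q.1 q.2 - c := by
        apply max_le h0
        rw [hLq]
        exact min_le_left _ _
      have h2 := hφicc m q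
      simp only [hgm]
      exact le_trans (mul_le_of_le_one_right (le_max_left _ _) h2.2) h1
    -- integrability of gm
    have hgmint : ∀ m, ∀ (μ : Measure (EucV n × A)), IsFiniteMeasure μ →
        Integrable (gm m) μ := by
      intro m μ hμfin
      haveI := hμfin
      refine aux_integrable_bdd (C := (m : ℝ)) (hgmc m).aestronglyMeasurable ?_
      filter_upwards with q
      rw [Real.norm_eq_abs, abs_of_nonneg (hgm_nonneg m q)]
      exact hgm_le m q
    -- each gm integral against μ0 is ≤ l - c * mass0
    have hgm_bound : ∀ m : ℕ, (∫ q, gm m q ∂p0.1) ≤ l - c * (p0.1 univ).toReal := by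
      intro m
      have hconv1 : Tendsto (fun j => ∫ q, gm m q ∂(ps j).1) atTop (𝓝 (∫ q, gm m q ∂p0.1)) := by
        have hwm := hw (gm m) (hgmc m) ((hφcs m).mul_left) (fun _ => 0) continuousOn_const
        simpa [integral_zero, add_zero] using hwm
      have hconv2 : Tendsto (fun j => intL L (ps j).1 - c * (((ps j).1) univ).toReal) atTop
          (𝓝 (l - c * (p0.1 univ).toReal)) := hl.sub (hmass1.const_mul c)
      refine le_of_tendsto_of_tendsto' hconv1 hconv2 (fun j => ?_)
      haveI := hfin1 j
      have hIj := (hps j).1.2.1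
      have hineq : ∀ᵐ q ∂(ps j).1, gm m q ≤ L q.1 q.2 - c := by
        filter_upwards [hae _ (hps j).1.1] with q hq
        exact hgm_leL m q hq
      calc (∫ q, gm m q ∂(ps j).1) ≤ ∫ q : EucV n × A, (L q.1 q.2 - c) ∂(ps j).1 :=
            integral_mono_ae (hgmint m _ (hfin1 j)) (hIj.sub (integrable_const c)) hineq
        _ = intL L (ps j).1 - c * (((ps j).1) univ).toReal := by
            rw [integral_sub hIj (integrable_const c), integral_const, smul_eq_mul, measureReal_def]
            unfold intL; ring
    -- dominated convergence in m
    have hdom : Tendsto (fun m => ∫ q, gm m q ∂p0.1) atTop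
        (𝓝 (∫ q : EucV n × A, (L q.1 q.2 - c) ∂p0.1)) := by
      refine tendsto_integral_of_dominated_convergence
        (fun q : EucV n × A => L q.1 q.2 - c)
        (fun m => (hgmc m).aestronglyMeasurable) (hp0.2.1.sub (integrable_const c)) ?_ ?_
      · intro m
        filter_upwards [hae _ hp0.1] with q hq
        rw [Real.norm_eq_abs, abs_of_nonneg (hgm_nonneg m q)]
        exact hgm_leL m q hq
      · filter_upwards [hae _ hp0.1] with q hq
        have hLq : Lt q = L q.1 q.2 := hLt q hq
        have h0 : 0 ≤ L q.1 q.2 - c := by have := hcL q.1 hq.1 q.2; linarith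
        apply Tendsto.congr' ?_ tendsto_const_nhds
        obtain ⟨m₀, hm₀⟩ := E.exists_mem q.2
        obtain ⟨m₁, hm₁⟩ := exists_nat_ge (L q.1 q.2 - c)
        filter_upwards [Filter.eventually_ge_atTop m₀, Filter.eventually_ge_atTop m₁]
          with m hm hm'
        have hq2 : q ∈ closure Ω ×ˢ E m := Set.mk_mem_prod hq.1 (E.subset hm hm₀)
        have hφeq : φ m q = 1 := hφ1 m hq2
        have hmin : min (Lt q - c) (m:ℝ) = Lt q - c := by
          apply min_eq_left
          rw [hLq]
          exact le_trans hm₁ (Nat.cast_le.mpr hm')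
        have hgmq : gm m q = max 0 (Lt q - c) := by
          simp only [hgm, hφeq, mul_one, hmin]
        rw [hgmq, hLq, max_eq_right h0]
    have hfinal : ∫ q : EucV n × A, (L q.1 q.2 - c) ∂p0.1 ≤ l - c * (p0.1 univ).toReal :=
      le_of_tendsto hdom (Filter.Eventually.of_forall hgm_bound)
    have hsplit : ∫ q : EucV n × A, (L q.1 q.2 - c) ∂p0.1 =
        intL L p0.1 - c * (p0.1 univ).toReal := by
      rw [integral_sub hp0.2.1 (integrable_const c), integral_const, smul_eq_mul, measureReal_def]
      unfold intL; ring
    linarith [hsplit ▸ hfinal]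
  -- splitting of boundary integrals
  have hsplitB : ∀ (σ : Measure (EucV n)), IsFiniteMeasure σ → σ ((frontier Ω)ᶜ) = 0 →
      ∀ (f ft : EucV n → ℝ), Continuous ft → (∀ x ∈ frontier Ω, ft x = f x) → ∀ (r : ℝ),
      ∫ x, (f x - r) ∂σ = (∫ x, ft x ∂σ) - r * (σ univ).toReal := by
    intro σ hσfin hσsupp f ft hftc hft r
    haveI := hσfin
    have hcongr : (fun x => f x - r) =ᵐ[σ] fun x => ft x - r := by
      filter_upwards [haeb σ hσsupp] with x hx
      rw [hft x hx]
    rw [integral_congr_ae hcongr, integral_sub (hint2 σ hσfin hσsupp ft hftc)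
      (integrable_const r), integral_const, smul_eq_mul, measureReal_def, mul_comm]
  -- splitting of interior integrals
  have hsplitI : ∀ (μ : Measure (EucV n × A)), IsFiniteMeasure μ → SuppInBar Ω μ →
      Integrable (fun q : EucV n × A => L q.1 q.2) μ →
      ∀ (t : ℝ) (f ft : EucV n → ℝ), Continuous ft → (∀ x ∈ closure Ω, ft x = f x) →
      ∀ (r : ℝ), (∫ w : EucV n × A, (t * L w.1 w.2 + f w.1 - r) ∂μ)
        = t * intL L μ + (∫ q : EucV n × A, ft q.1 ∂μ) - r * (μ univ).toReal := by
    intro μ hμfin hμsupp hμintL t f ft hftc hft r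
    haveI := hμfin
    have hcongr : (fun w : EucV n × A => t * L w.1 w.2 + f w.1 - r) =ᵐ[μ]
        fun w => t * L w.1 w.2 + ft w.1 - r := by
      filter_upwards [hae μ hμsupp] with q hq
      rw [hft q.1 hq.1]
    have hint_tL : Integrable (fun w : EucV n × A => t * L w.1 w.2) μ := hμintL.const_mul t
    have hint_ft : Integrable (fun w : EucV n × A => ft w.1) μ := hint1 μ hμfin hμsupp ft hftc
    have hsum : Integrable (fun w : EucV n × A => t * L w.1 w.2 + ft w.1) μ :=
      hint_tL.add hint_ft
    rw [integral_congr_ae hcongr, integral_sub hsum (integrable_const r),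
      integral_add hint_tL hint_ft, integral_const, smul_eq_mul, measureReal_def, integral_const_mul, mul_comm r]
    rfl
  -- Tietze extensions will be chosen per test data below.
  -- Part (i), main inequality
  have hpartI : ∀ (t : ℝ) (χ ψ u : EucV n → ℝ), memFDM Ω F M lam t χ ψ u →
      0 ≤ t * (l - intL L p0.1) +
        (∫ w : EucV n × A, (t * L w.1 w.2 + χ w.1 - lam * u z) ∂p0.1) +
        lam * ∫ x, (ψ x - u z) ∂p0.2 := by
    intro t χ ψ u hmem
    obtain ⟨⟨ht, hχc, hψc, huc, hsub, hbd⟩, hχM, hψM⟩ := hmem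
    obtain ⟨χt, hχtc, hχt⟩ := aux_tietze isClosed_closure hχc
    obtain ⟨ut, hutc, hut⟩ := aux_tietze isClosed_closure huc
    obtain ⟨ψt, hψtc, hψt⟩ := aux_tietze isClosed_frontier hψc
    obtain ⟨Cu, hCu0, hCu⟩ := aux_bound_on_compact hΩcpt hutc
    obtain ⟨x₀, hx₀, hmax⟩ := hΩcpt.exists_isMaxOn hΩne
      ((continuous_abs.comp_continuousOn hχc))
    set Sχ : ℝ := |χ x₀| with hSχdef
    have hSχ : Sχ < t * M := hχM x₀ hx₀
    have hSχb : ∀ x ∈ closure Ω, |χ x| ≤ Sχ := fun x hx => hmax hx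
    set ε : ℝ := (t * M - Sχ) / (Cu + 1) with hεdef
    have hε : 0 < ε := div_pos (by linarith) (by linarith)
    have hεeq : ε * (Cu + 1) = t * M - Sχ := div_mul_cancel₀ _ (by linarith)
    -- eventual inequality along the sequence
    have hev : ∀ᶠ j in atTop, 0 ≤
        (∫ w : EucV n × A, (t * L w.1 w.2 + (χ w.1 + (lams j - lam) * u w.1)
          - lams j * u z) ∂(ps j).1) + ∫ x, lams j * (ψ x - u z) ∂(ps j).2 := by
      have hclose := Metric.tendsto_nhds.mp hconv ε hε
      filter_upwards [hclose] with j hj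
      rw [Real.dist_eq] at hj
      refine (hps j).2.2 t (fun x => χ x + (lams j - lam) * u x) ψ u ?_
      refine ⟨⟨ht, hχc.add (continuousOn_const.mul huc), hψc, huc, ?_, hbd⟩, ?_, hψM⟩
      · intro ϕ hϕ x hx hmaxx
        have h0 := hsub ϕ hϕ x hx hmaxx
        simp only [Fphi] at h0 ⊢
        linarith
      · intro x hx
        have h1 := hSχb x hx
        have h2 : |u x| ≤ Cu := by rw [← hut x hx]; exact hCu x hx
        have h3 : |χ x + (lams j - lam) * u x| ≤ |χ x| + |lams j - lam| * |u x| := by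
          rw [← abs_mul]
          exact abs_add_le _ _
        have h4 : |lams j - lam| * |u x| ≤ ε * Cu :=
          mul_le_mul hj.le h2 (abs_nonneg _) hε.le
        have h5 : ε * Cu < ε * (Cu + 1) := by nlinarith
        linarith
    -- convergence of each term
    have hχconv := hconvh χt hχtc
    have huconv : Tendsto (fun j => (lams j - lam) * ∫ q : EucV n × A, ut q.1 ∂(ps j).1)
        atTop (𝓝 0) := by
      have hbd : ∀ j, |∫ q : EucV n × A, ut q.1 ∂(ps j).1| ≤ Cu := by
        intro j
        haveI := hfin1 j
        have h1 : |∫ q : EucV n × A, ut q.1 ∂(ps j).1| ≤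
            ∫ q : EucV n × A, |ut q.1| ∂(ps j).1 := by
          rw [← Real.norm_eq_abs]
          exact (norm_integral_le_integral_norm _).trans (le_of_eq (by simp))
        have h2 : ∫ q : EucV n × A, |ut q.1| ∂(ps j).1 ≤
            ∫ _q : EucV n × A, Cu ∂(ps j).1 := by
          refine integral_mono_ae ((hint1 _ (hfin1 j) (hps j).1.1 ut hutc).abs)
            (integrable_const Cu) ?_
          filter_upwards [hae _ (hps j).1.1] with q hq
          exact hCu q.1 hq.1
        have h3 : ∫ _q : EucV n × A, Cu ∂(ps j).1 = (((ps j).1) univ).toReal * Cu := by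
          rw [integral_const, smul_eq_mul, measureReal_def]
        have h4 := (hm2le _ _ (hps j).1).2.1
        have h5 : (0:ℝ) ≤ (((ps j).1) univ).toReal := ENNReal.toReal_nonneg
        nlinarith
      have hto0 : Tendsto (fun j => |lams j - lam| * Cu) atTop (𝓝 0) := by
        have h0 : Tendsto (fun j => lams j - lam) atTop (𝓝 0) := by
          simpa using hconv.sub_const lam
        simpa using h0.abs.mul_const Cu
      refine squeeze_zero_norm (fun j => ?_) hto0
      rw [Real.norm_eq_abs, abs_mul]
      exact mul_le_mul_of_nonneg_left (hbd j) (abs_nonneg _)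
    have hψconv : Tendsto (fun j => ∫ x, ψt x ∂(ps j).2) atTop (𝓝 (∫ x, ψt x ∂p0.2)) := by
      have h := hw (fun _ => 0) continuous_const (by simp [HasCompactSupport, tsupport])
        ψt hψtc.continuousOn
      simpa [integral_zero, zero_add] using h
    -- the full limit
    have hlim : Tendsto (fun j =>
        (∫ w : EucV n × A, (t * L w.1 w.2 + (χ w.1 + (lams j - lam) * u w.1)
          - lams j * u z) ∂(ps j).1) + ∫ x, lams j * (ψ x - u z) ∂(ps j).2) atTop
        (𝓝 (t * l + ((∫ q : EucV n × A, χt q.1 ∂p0.1) + 0)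
          - lam * u z * (p0.1 univ).toReal
          + lam * ((∫ x, ψt x ∂p0.2) - u z * (p0.2 univ).toReal))) := by
      have heq : ∀ j, (∫ w : EucV n × A, (t * L w.1 w.2 + (χ w.1 + (lams j - lam) * u w.1)
          - lams j * u z) ∂(ps j).1) + ∫ x, lams j * (ψ x - u z) ∂(ps j).2
          = t * intL L (ps j).1 + ((∫ q : EucV n × A, χt q.1 ∂(ps j).1)
            + (lams j - lam) * (∫ q : EucV n × A, ut q.1 ∂(ps j).1))
            - lams j * u z * (((ps j).1) univ).toReal
            + lams j * ((∫ x, ψt x ∂(ps j).2) - u z * (((ps j).2) univ).toReal) := by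
        intro j
        haveI := hfin1 j
        haveI := hfin2 j
        have hB : ∫ x, lams j * (ψ x - u z) ∂(ps j).2
            = lams j * ((∫ x, ψt x ∂(ps j).2) - u z * (((ps j).2) univ).toReal) := by
          rw [integral_const_mul, hsplitB _ (hfin2 j) (hps j).1.2.2.1 ψ ψt hψtc hψt (u z)]
        have hI : (∫ w : EucV n × A, (t * L w.1 w.2 + (χ w.1 + (lams j - lam) * u w.1)
            - lams j * u z) ∂(ps j).1)
            = t * intL L (ps j).1 + ((∫ q : EucV n × A, χt q.1 ∂(ps j).1)
              + (lams j - lam) * (∫ q : EucV n × A, ut q.1 ∂(ps j).1))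
              - lams j * u z * (((ps j).1) univ).toReal := by
          have h1 := hsplitI _ (hfin1 j) (hps j).1.1 (hps j).1.2.1 t
            (fun x => χ x + (lams j - lam) * u x)
            (fun x => χt x + (lams j - lam) * ut x)
            (hχtc.add (continuous_const.mul hutc))
            (fun x hx => by
              show χt x + (lams j - lam) * ut x = χ x + (lams j - lam) * u x
              rw [hχt x hx, hut x hx]) (lams j * u z)
          rw [h1]
          have h2 : (∫ q : EucV n × A, (χt q.1 + (lams j - lam) * ut q.1) ∂(ps j).1)
              = (∫ q : EucV n × A, χt q.1 ∂(ps j).1)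
                + (lams j - lam) * (∫ q : EucV n × A, ut q.1 ∂(ps j).1) := by
            rw [integral_add (hint1 _ (hfin1 j) (hps j).1.1 χt hχtc)
              ((hint1 _ (hfin1 j) (hps j).1.1 ut hutc).const_mul _), integral_const_mul]
          rw [h2]
        rw [hB, hI]
      rw [show (fun j => (∫ w : EucV n × A, (t * L w.1 w.2 + (χ w.1 + (lams j - lam) * u w.1)
          - lams j * u z) ∂(ps j).1) + ∫ x, lams j * (ψ x - u z) ∂(ps j).2) = fun j =>
          t * intL L (ps j).1 + ((∫ q : EucV n × A, χt q.1 ∂(ps j).1)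
            + (lams j - lam) * (∫ q : EucV n × A, ut q.1 ∂(ps j).1))
            - lams j * u z * (((ps j).1) univ).toReal
            + lams j * ((∫ x, ψt x ∂(ps j).2) - u z * (((ps j).2) univ).toReal)
        from funext heq]
      exact ((((hl.const_mul t).add (hχconv.add huconv)).sub
        (((hconv.mul tendsto_const_nhds).mul hmass1))).add
        (hconv.mul (hψconv.sub (hmass2.const_mul (u z)))))
    have hge := ge_of_tendsto hlim hev
    -- rewrite the target using the splittings
    have htarg1 : (∫ w : EucV n × A, (t * L w.1 w.2 + χ w.1 - lam * u z) ∂p0.1)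
        = t * intL L p0.1 + (∫ q : EucV n × A, χt q.1 ∂p0.1)
          - lam * u z * (p0.1 univ).toReal :=
      hsplitI _ hfin01 hp0.1 hp0.2.1 t χ χt hχtc hχt (lam * u z)
    have htarg2 : ∫ x, (ψ x - u z) ∂p0.2
        = (∫ x, ψt x ∂p0.2) - u z * (p0.2 univ).toReal :=
      hsplitB _ hfin02 hp0.2.2.1 ψ ψt hψtc hψt (u z)
    rw [htarg1, htarg2]
    linarith
  refine ⟨⟨(by linarith : (0:ℝ) ≤ l - intL L p0.1), hp0, hpartI⟩, ?_⟩
  rintro ⟨hdag, hcase⟩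
  obtain ⟨hρnn, hPD0, hdagI⟩ := hdag
  have hsupp0 : p0.1 Sᶜ = 0 := hp0.1
  obtain ⟨Lt, hLtc, hLt⟩ := aux_tietze hSclosed (f := fun q : EucV n × A => L q.1 q.2)
    hdata.2.2.1
  have hLt_cong : ∀ (μ : Measure (EucV n × A)), (∀ᵐ q ∂μ, q ∈ S) →
      (fun q : EucV n × A => L q.1 q.2) =ᵐ[μ] Lt := by
    intro μ h
    filter_upwards [h] with q hq
    rw [hLt q hq]
  have hLtint0 : Integrable Lt p0.1 := hp0.2.1.congr (hLt_cong _ (hae _ hp0.1))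
  have hI0 : ∫ q, Lt q ∂p0.1 = intL L p0.1 :=
    (integral_congr_ae (hLt_cong p0.1 (hae _ hp0.1))).symm
  by_cases hA : CompactSpace A
  · -- A compact : no escape of mass, ρ = 0, take ν = p0
    obtain ⟨ζ, hζc, hζcs, hζ1, hζicc⟩ := aux_urysohn (X := EucV n) hΩcpt
    set f : EucV n × A → ℝ := fun q => Lt q * ζ q.1 with hfdef
    have hfc : Continuous f := hLtc.mul (hζc.comp continuous_fst)
    have hfcs : HasCompactSupport f := by
      apply HasCompactSupport.intro ((hζcs).prod isCompact_univ)
      intro q hq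
      have hq1 : q.1 ∉ tsupport ζ := fun h => hq ⟨h, trivial⟩
      simp [hfdef, image_eq_zero_of_notMem_tsupport hq1]
    have haeq : ∀ (μ : Measure (EucV n × A)), SuppInBar Ω μ → ∫ q, f q ∂μ = intL L μ := by
      intro μ h
      refine integral_congr_ae ?_
      filter_upwards [hae μ h] with q hq
      rw [hfdef]
      simp only
      rw [hLt q hq, hζ1 hq.1, Pi.one_apply, mul_one]
    have hwf := hw f hfc hfcs (fun _ => 0) continuousOn_const
    simp only [integral_zero, add_zero] at hwf
    have hLconv : Tendsto (fun j => intL L (ps j).1) atTop (𝓝 (intL L p0.1)) := by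
      rw [← haeq _ hp0.1]
      exact hwf.congr (fun j => haeq _ (hps j).1.1)
    have hρeq : l - intL L p0.1 = 0 := by
      have := tendsto_nhds_unique hl hLconv
      linarith
    refine ⟨p0, hp0, ⟨hp0.2.1, ?_⟩, by rw [hρeq]; ring, fun ψ η _ _ => rfl⟩
    intro t χ ψ u hm
    have hd : 0 ≤ t * (l - intL L p0.1) +
        (∫ w : EucV n × A, (t * L w.1 w.2 + χ w.1 - lam * u z) ∂p0.1) +
        lam * ∫ x, (ψ x - u z) ∂p0.2 := hdagI t χ ψ u hm
    rw [hρeq] at hd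
    rw [integral_const_mul]
    linarith
  · -- A noncompact : modify the limit measure to recover the escaped mass
    have hμ0 : p0.1 ≠ 0 := hcase.resolve_left hA
    have hρ0 : 0 ≤ l - intL L p0.1 := by linarith
    have hmass0pos : 0 < (p0.1 univ).toReal :=
      ENNReal.toReal_pos (Measure.measure_univ_pos.mpr hμ0).ne' (measure_ne_top _ _)
    set m₀ : ℝ := (|intL L p0.1| + (l - intL L p0.1) + 1) / (p0.1 univ).toReal with hm₀def
    obtain ⟨K, hKc, hKL⟩ := hL m₀
    obtain ⟨α₀, hα₀⟩ : ∃ α : A, α ∉ K := by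
      by_contra h
      push_neg at h
      exact hA (isCompact_univ_iff.mp ((Set.eq_univ_of_forall h) ▸ hKc))
    have hLα₀ : ∀ x ∈ closure Ω, m₀ ≤ L x α₀ := fun x hx => hKL x hx α₀ hα₀
    set J : ℝ := ∫ q : EucV n × A, Lt (q.1, α₀) ∂p0.1 with hJdef
    have hJint : Integrable (fun q : EucV n × A => Lt (q.1, α₀)) p0.1 :=
      hint1 _ hfin01 hp0.1 (fun x => Lt (x, α₀))
        (hLtc.comp (continuous_id.prodMk continuous_const))
    have hJge : intL L p0.1 + (l - intL L p0.1) + 1 ≤ J := by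
      have h1 : ∫ _q : EucV n × A, m₀ ∂p0.1 ≤ J := by
        refine integral_mono_ae (integrable_const _) hJint ?_
        filter_upwards [hae _ hp0.1] with q hq
        have h := hLα₀ q.1 hq.1
        rw [hLt (q.1, α₀) ⟨hq.1, trivial⟩]
        exact h
      have h2 : ∫ _q : EucV n × A, m₀ ∂p0.1 = m₀ * (p0.1 univ).toReal := by
        rw [integral_const, smul_eq_mul, measureReal_def, mul_comm]
      have h3 : m₀ * (p0.1 univ).toReal = |intL L p0.1| + (l - intL L p0.1) + 1 :=
        div_mul_cancel₀ _ hmass0pos.ne'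
      have h4 : intL L p0.1 ≤ |intL L p0.1| := le_abs_self _
      linarith
    have hJI : 0 < J - intL L p0.1 := by linarith
    set s : ℝ := (l - intL L p0.1) / (J - intL L p0.1) with hsdef
    have hs0 : 0 ≤ s := div_nonneg hρ0 hJI.le
    have hs1 : s ≤ 1 := by rw [hsdef, div_le_one hJI]; linarith
    have hsρ : s * (J - intL L p0.1) = l - intL L p0.1 := div_mul_cancel₀ _ hJI.ne'
    set T : EucV n × A → EucV n × A := fun q => (q.1, α₀) with hTdef
    have hTm : Measurable T := measurable_fst.prodMk measurable_const
    set ν₁ : Measure (EucV n × A) :=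
      ENNReal.ofReal (1 - s) • p0.1 + ENNReal.ofReal s • (p0.1.map T) with hν₁def
    have hmapS : (p0.1.map T) Sᶜ = 0 := by
      rw [Measure.map_apply hTm hSmeas.compl]
      refine measure_mono_null ?_ hsupp0
      intro q hq hqS
      exact hq ⟨hqS.1, trivial⟩
    have hν₁S : ν₁ Sᶜ = 0 := by
      rw [hν₁def]
      simp [Measure.add_apply, Measure.smul_apply, hmapS, hsupp0]
    have hν₁supp : SuppInBar Ω ν₁ := hν₁S
    have haeS_ν : ∀ᵐ q ∂ν₁, q ∈ S := hae ν₁ hν₁supp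
    have hofsum : ENNReal.ofReal (1 - s) + ENNReal.ofReal s = 1 := by
      rw [← ENNReal.ofReal_add (by linarith) hs0]
      norm_num
    have hν₁univ : ν₁ univ = p0.1 univ := by
      have hcalc : ν₁ univ = (ENNReal.ofReal (1 - s) + ENNReal.ofReal s) * p0.1 univ := by
        rw [hν₁def]
        simp only [Measure.add_apply, Measure.smul_apply, smul_eq_mul,
          Measure.map_apply hTm MeasurableSet.univ, Set.preimage_univ]
        ring
      rw [hcalc, hofsum, one_mul]
    have hν₁fin : IsFiniteMeasure ν₁ := by
      constructor
      rw [hν₁univ]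
      exact measure_lt_top _ _
    -- master integral formula for ν₁
    have hν₁int : ∀ f : EucV n × A → ℝ, Continuous f → Integrable f p0.1 →
        Integrable f ν₁ ∧
        ∫ q, f q ∂ν₁ = (1 - s) * (∫ q, f q ∂p0.1) + s * ∫ q : EucV n × A, f (q.1, α₀) ∂p0.1 := by
      intro f hfc hfint
      have hmapint : Integrable f (p0.1.map T) := by
        rw [integrable_map_measure hfc.aestronglyMeasurable hTm.aemeasurable]
        have : Integrable (fun q : EucV n × A => f (q.1, α₀)) p0.1 :=
          hint1 _ hfin01 hp0.1 (fun x => f (x, α₀))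
            (hfc.comp (continuous_id.prodMk continuous_const))
        exact this
      have h1 : Integrable f (ENNReal.ofReal (1 - s) • p0.1) :=
        hfint.smul_measure ENNReal.ofReal_ne_top
      have h2 : Integrable f (ENNReal.ofReal s • p0.1.map T) :=
        hmapint.smul_measure ENNReal.ofReal_ne_top
      constructor
      · rw [hν₁def]
        exact h1.add_measure h2
      · rw [hν₁def, integral_add_measure h1 h2, integral_smul_measure, integral_smul_measure,
          integral_map hTm.aemeasurable hfc.aestronglyMeasurable,
          ENNReal.toReal_ofReal (by linarith), ENNReal.toReal_ofReal hs0]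
        simp only [smul_eq_mul, hTdef]
    obtain ⟨hLtintν, hLtν⟩ := hν₁int Lt hLtc hLtint0
    have hνL : Integrable (fun q : EucV n × A => L q.1 q.2) ν₁ :=
      hLtintν.congr ((hLt_cong ν₁ haeS_ν).symm)
    have hintLν : intL L ν₁ = (l - intL L p0.1) + intL L p0.1 := by
      have e1 : intL L ν₁ = ∫ q, Lt q ∂ν₁ := integral_congr_ae (hLt_cong ν₁ haeS_ν)
      rw [e1, hLtν, hI0, ← hJdef]
      linear_combination hsρ
    have hPDν : (ν₁, p0.2) ∈ PDset Ω L := by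
      refine ⟨hν₁supp, hνL, hp0.2.2.1, ?_⟩
      rw [hν₁univ]
      exact hp0.2.2.2
    refine ⟨(ν₁, p0.2), hPDν, ⟨hνL, ?_⟩, hintLν, ?_⟩
    · -- dual cone inequality
      intro t χ ψ u hm
      obtain ⟨ht, hχc, hψc, huc, hsub, hbd⟩ := hm
      obtain ⟨χt, hχtc, hχt⟩ := aux_tietze isClosed_closure hχc
      set G : EucV n × A → ℝ := fun q => t * Lt q + χt q.1 - lam * u z with hGdef
      have hGc : Continuous G := ((continuous_const.mul hLtc).add
        (hχtc.comp continuous_fst)).sub continuous_const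
      have hGint0 : Integrable G p0.1 :=
        ((hLtint0.const_mul t).add (hint1 _ hfin01 hp0.1 χt hχtc)).sub (integrable_const _)
      have hGcong : ∀ (μ : Measure (EucV n × A)), (∀ᵐ q ∂μ, q ∈ S) →
          (fun w : EucV n × A => t * L w.1 w.2 + χ w.1 - lam * u z) =ᵐ[μ] G := by
        intro μ h
        filter_upwards [h] with q hq
        rw [hGdef]
        simp only
        rw [hLt q hq, hχt q.1 hq.1]
      obtain ⟨-, hGν⟩ := hν₁int G hGc hGint0
      have hGsplit : ∀ (v : ℝ) (hv : ∫ q, Lt q ∂p0.1 = v ∨ True), True := fun _ _ => trivial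
      have e3 : ∫ q, G q ∂p0.1 = t * intL L p0.1 + (∫ q : EucV n × A, χt q.1 ∂p0.1)
          - lam * u z * (p0.1 univ).toReal := by
        have hsum : Integrable (fun q : EucV n × A => t * Lt q + χt q.1) p0.1 :=
          (hLtint0.const_mul t).add (hint1 _ hfin01 hp0.1 χt hχtc)
        rw [hGdef]
        simp only
        rw [integral_sub hsum (integrable_const _),
          integral_add (hLtint0.const_mul t) (hint1 _ hfin01 hp0.1 χt hχtc),
          integral_const_mul, integral_const, smul_eq_mul, measureReal_def, hI0]
        ring
      have e4 : ∫ q : EucV n × A, G (q.1, α₀) ∂p0.1 = t * J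
          + (∫ q : EucV n × A, χt q.1 ∂p0.1) - lam * u z * (p0.1 univ).toReal := by
        have hsum : Integrable (fun q : EucV n × A => t * Lt (q.1, α₀) + χt q.1) p0.1 :=
          (hJint.const_mul t).add (hint1 _ hfin01 hp0.1 χt hχtc)
        rw [hGdef]
        simp only
        rw [integral_sub hsum (integrable_const _),
          integral_add (hJint.const_mul t) (hint1 _ hfin01 hp0.1 χt hχtc),
          integral_const_mul, integral_const, smul_eq_mul, measureReal_def, ← hJdef]
        ring
      have key : ∫ w : EucV n × A, (t * L w.1 w.2 + χ w.1 - lam * u z) ∂ν₁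
          = (∫ w : EucV n × A, (t * L w.1 w.2 + χ w.1 - lam * u z) ∂p0.1)
            + t * (l - intL L p0.1) := by
        rw [integral_congr_ae (hGcong ν₁ haeS_ν), integral_congr_ae (hGcong p0.1 (hae _ hp0.1)),
          hGν, e3, e4]
        linear_combination t * hsρ
      have hd : 0 ≤ t * (l - intL L p0.1) +
          (∫ w : EucV n × A, (t * L w.1 w.2 + χ w.1 - lam * u z) ∂p0.1) +
          lam * ∫ x, (ψ x - u z) ∂p0.2 :=
        hdagI t χ ψ u ⟨ht, hχc, hψc, huc, hsub, hbd⟩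
      rw [key, integral_const_mul]
      linarith
    · -- pairings
      intro ψ' η hψ'c hηc
      obtain ⟨ψt', hψt'c, hψt'⟩ := aux_tietze isClosed_closure hψ'c
      have hcong : ∀ (μ : Measure (EucV n × A)), (∀ᵐ q ∂μ, q ∈ S) →
          (fun q : EucV n × A => ψ' q.1) =ᵐ[μ] fun q : EucV n × A => ψt' q.1 := by
        intro μ h
        filter_upwards [h] with q hq
        rw [hψt' q.1 hq.1]
      obtain ⟨-, hψν⟩ := hν₁int (fun q : EucV n × A => ψt' q.1)
        (hψt'c.comp continuous_fst) (hint1 _ hfin01 hp0.1 ψt' hψt'c)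
      have e1 : ∫ q : EucV n × A, ψ' q.1 ∂ν₁ = ∫ q : EucV n × A, ψ' q.1 ∂p0.1 := by
        rw [integral_congr_ae (hcong ν₁ haeS_ν), integral_congr_ae (hcong p0.1 (hae _ hp0.1)),
          hψν]
        simp only
        ring
      rw [e1]
end

section
/- Assume (F1), (F2), (L), (CPD), (SLD) and (EC). Then the critical value c_D for the vanishing discount Dirichlet problem satisfies c_D = min{ c ≥ 0 : the ergodic Dirichlet problem (ED_c) has a solution in C(Ω̄) }; in particular this minimum is attained. -/
open MeasureTheory Filter Topology Set

section auxlemmas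

variable {n : ℕ}

lemma locMax_shift {D : Set (EucV n)} {x : EucV n} {u ϕ : EucV n → ℝ} {K : ℝ}
    (h : IsLocalMaxOn (fun y => (u y - K) - ϕ y) D x) :
    IsLocalMaxOn (fun y => u y - ϕ y) D x := by
  have h2 : ∀ᶠ y in nhdsWithin x D, (u y - K) - ϕ y ≤ (u x - K) - ϕ x := h
  have h3 : ∀ᶠ y in nhdsWithin x D, u y - ϕ y ≤ u x - ϕ x := by
    filter_upwards [h2] with y hy; linarith
  exact h3

lemma locMin_shift {D : Set (EucV n)} {x : EucV n} {u ϕ : EucV n → ℝ} {K : ℝ}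
    (h : IsLocalMinOn (fun y => (u y + K) - ϕ y) D x) :
    IsLocalMinOn (fun y => u y - ϕ y) D x := by
  have h2 : ∀ᶠ y in nhdsWithin x D, (u x + K) - ϕ x ≤ (u y + K) - ϕ y := h
  have h3 : ∀ᶠ y in nhdsWithin x D, u x - ϕ x ≤ u y - ϕ y := by
    filter_upwards [h2] with y hy; linarith
  exact h3

lemma subsol_shift0 {D S : Set (EucV n)} {F : Op n} {c : EucV n → ℝ} {u : EucV n → ℝ}
    (K : ℝ) (h : SubsolOn D S 0 F c u) :
    SubsolOn D S 0 F c (fun x => u x - K) := by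
  intro ϕ hϕ x hx hmax
  have h0 := h ϕ hϕ x hx (locMax_shift hmax)
  simpa using h0

lemma supersol_shift0 {D S : Set (EucV n)} {F : Op n} {c : EucV n → ℝ} {u : EucV n → ℝ}
    (K : ℝ) (h : SupersolOn D S 0 F c u) :
    SupersolOn D S 0 F c (fun x => u x - K) := by
  intro ϕ hϕ x hx hmin
  have hmin' : IsLocalMinOn (fun y => (u y + (-K)) - ϕ y) D x := by
    have h2 : ∀ᶠ y in nhdsWithin x D, (u x - K) - ϕ x ≤ (u y - K) - ϕ y := hmin
    have h3 : ∀ᶠ y in nhdsWithin x D, (u x + (-K)) - ϕ x ≤ (u y + (-K)) - ϕ y := by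
      filter_upwards [h2] with y hy; linarith
    exact h3
  have h0 := h ϕ hϕ x hx (locMin_shift hmin')
  simpa using h0

end auxlemmas

/-- Proposition 4.8 ("prop-d-cv"): the critical value `c_D` of the vanishing
discount Dirichlet problem equals
`min { c ≥ 0 : (ED_c) has a solution in C(Ω̄) }`, the minimum being attained. -/
theorem stmt16 {n : ℕ} {A : Type*} [MetricSpace A] [Nonempty A]
    [SigmaCompactSpace A] [LocallyCompactSpace A]
    (Ω : Set (EucV n)) (hΩ : BoundedDomain Ω)
    (a : EucV n → A → Matrix (Fin n) (Fin n) ℝ) (b : EucV n → A → EucV n)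
    (L : EucV n → A → ℝ) (F : Op n)
    (hdata : CondData Ω a b L) (hF1 : CondF1 Ω a b L F) (hF2 : CondF2 Ω F)
    (hL : CondL Ω L) (hCPD : CondCPD Ω F)
    (g : EucV n → ℝ) (hg : ContinuousOn g (frontier Ω))
    (vfam : ℝ → EucV n → ℝ) (hSLD : CondSLD Ω F g vfam) (hEC : CondEC Ω vfam)
    (cD : ℝ)
    (hcD : (cD = 0 ∧ ∃ u : EucV n → ℝ, ContinuousOn u (closure Ω) ∧ SolED Ω F g 0 u) ∨
      (0 < cD ∧ ∃ u : EucV n → ℝ, ContinuousOn u (closure Ω) ∧ SolES Ω F cD u)) :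
    (∃ u : EucV n → ℝ, ContinuousOn u (closure Ω) ∧ SolED Ω F g cD u) ∧
    ∀ c : ℝ, 0 ≤ c → (∃ u : EucV n → ℝ, ContinuousOn u (closure Ω) ∧ SolED Ω F g c u) →
      cD ≤ c := by
  have hclK : IsCompact (closure Ω) :=
    Metric.isCompact_of_isClosed_isBounded isClosed_closure hΩ.2.2.closure
  have hfrK : IsCompact (frontier Ω) :=
    hclK.of_isClosed_subset isClosed_frontier (frontier_subset_closure)
  obtain ⟨x0, hx0⟩ := hΩ.2.1.nonempty
  have hx0' : x0 ∈ closure Ω := subset_closure hx0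
  rcases hcD with ⟨hc0, u, hu, hED⟩ | ⟨hcpos, w, hw, hES⟩
  · subst hc0
    exact ⟨⟨u, hu, hED⟩, fun c hc _ => hc⟩
  constructor
  · -- construct an ED_{cD} solution from the ES_{cD} solution w by shifting
    obtain ⟨K, hK⟩ : ∃ K : ℝ, ∀ x ∈ frontier Ω, w x - g x ≤ K := by
      rcases (frontier Ω).eq_empty_or_nonempty with he | _
      · exact ⟨0, fun x hx => by simp [he] at hx⟩
      · have hcont : ContinuousOn (fun x => w x - g x) (frontier Ω) :=
          (hw.mono frontier_subset_closure).sub hg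
        obtain ⟨K, hK⟩ := (hfrK.image_of_continuousOn hcont).bddAbove
        exact ⟨K, fun x hx => hK (Set.mem_image_of_mem _ hx)⟩
    refine ⟨fun x => w x - K, hw.sub continuousOn_const, ?_, ?_⟩
    · exact ⟨subsol_shift0 K hES.1, fun x hx => by have := hK x hx; simp; linarith⟩
    · intro ϕ hϕ x hx hmin
      have h0 := supersol_shift0 K hES.2 ϕ hϕ x hx hmin
      exact ⟨fun _ => h0, fun _ => Or.inl h0⟩
  · -- minimality via (CPD) at small discount λ
    rintro c hc ⟨v, hv, hvED⟩
    by_contra hlt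
    push_neg at hlt
    -- bounds
    obtain ⟨Mv0, hMv0⟩ := (hclK.image_of_continuousOn hv).bddAbove
    obtain ⟨Mw0, hMw0⟩ := (hclK.image_of_continuousOn hw).bddBelow
    set Mv : ℝ := max Mv0 0 with hMvdef
    set Mw : ℝ := max (-Mw0) 0 with hMwdef
    have hMv : ∀ x ∈ closure Ω, v x ≤ Mv := fun x hx =>
      le_trans (hMv0 (Set.mem_image_of_mem _ hx)) (le_max_left _ _)
    have hMvnn : (0 : ℝ) ≤ Mv := le_max_right _ _
    have hMw : ∀ x ∈ closure Ω, -Mw ≤ w x := fun x hx => by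
      have h1 : Mw0 ≤ w x := hMw0 (Set.mem_image_of_mem _ hx)
      have h2 : -Mw ≤ Mw0 := by
        have := le_max_left (-Mw0) (0 : ℝ); linarith
      linarith
    have hMwnn : (0 : ℝ) ≤ Mw := le_max_right _ _
    set B : ℝ := w x0 + Mw + Mv - v x0 with hBdef
    set lam : ℝ := (cD - c) / (|B| + 1) with hlamdef
    have hBpos : (0 : ℝ) < |B| + 1 := by positivity
    have hlam : 0 < lam := div_pos (by linarith) hBpos
    have hlamc : lam * (c / lam) = c := by field_simp
    have hlamcD : lam * (cD / lam) = cD := by field_simp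
    -- v shifted is a subsolution of (D_lam with data 0, g - c/lam)
    have hDsub : DSubsol Ω F lam (fun _ => 0) (fun x => g x - c / lam)
        (fun x => v x - (Mv + c / lam)) := by
      constructor
      · intro ϕ hϕ x hx hmax
        have h0 := hvED.1.1 ϕ hϕ x hx (locMax_shift hmax)
        have hFx : F x (gradV ϕ x) (hessM ϕ x) ≤ c := by simpa using h0
        have hvx : v x ≤ Mv := hMv x (subset_closure hx)
        have hmul : lam * (v x - Mv) ≤ 0 :=
          mul_nonpos_of_nonneg_of_nonpos hlam.le (by linarith)
        have hrw : lam * (v x - (Mv + c / lam)) = lam * (v x - Mv) - lam * (c / lam) := by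
          ring
        simp only []
        rw [hrw, hlamc]
        linarith
      · intro x hx
        have hb : v x ≤ g x := hvED.1.2 x hx
        simp only []
        linarith
    -- w shifted is a (generalized) supersolution
    have hDsup : DSupersol Ω F lam (fun _ => 0) (fun x => g x - c / lam)
        (fun x => w x + (Mw - cD / lam)) := by
      intro ϕ hϕ x hx hmin
      have hmin' : IsLocalMinOn (fun y => (w y + (Mw - cD / lam)) - ϕ y) (closure Ω) x := hmin
      have h0 := hES.2 ϕ hϕ x hx (locMin_shift hmin')
      have hFx : cD ≤ F x (gradV ϕ x) (hessM ϕ x) := by simpa using h0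
      have hwx : -Mw ≤ w x := hMw x hx
      have hkey : (0 : ℝ) ≤ lam * (w x + (Mw - cD / lam)) + F x (gradV ϕ x) (hessM ϕ x) := by
        have hmul : 0 ≤ lam * (w x + Mw) := mul_nonneg hlam.le (by linarith)
        have hrw : lam * (w x + (Mw - cD / lam)) = lam * (w x + Mw) - lam * (cD / lam) := by
          ring
        rw [hrw, hlamcD]
        linarith
      exact ⟨fun _ => hkey, fun _ => Or.inl hkey⟩
    have hcmp := hCPD lam hlam (fun _ => 0) (fun x => g x - c / lam)
      continuousOn_const (hg.sub continuousOn_const)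
      (fun x => v x - (Mv + c / lam)) (fun x => w x + (Mw - cD / lam))
      (hv.sub continuousOn_const) (hw.add continuousOn_const)
      hDsub hDsup x0 hx0'
    have hB1 : (cD - c) / lam ≤ B := by
      have h1 : v x0 - (Mv + c / lam) ≤ w x0 + (Mw - cD / lam) := hcmp
      rw [sub_div]
      have h2 : cD / lam - c / lam ≤ w x0 + Mw + Mv - v x0 := by linarith
      linarith [hBdef]
    have hB2 : (cD - c) / lam = |B| + 1 := by
      have hne : cD - c ≠ 0 := by linarith
      rw [hlamdef]
      field_simp
    have := le_abs_self B
    rw [hB2] at hB1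
    linarith
end
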